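/- Let B be a locally compact Hausdorff space, let O ⊆ B be an open subset, and let (E_x)_{x∈B} be a family of complex Hilbert spaces such that E_x = {0} for every x ∉ O. Suppose Γ_O ⊆ ∏_{x∈O} E_x is such that ((E_x)_{x∈O}, Γ_O) is a continuous family of Hilbert spaces over the subspace O. Define Γ ⊆ ∏_{x∈B} E_x to consist of those s whose restriction to O belongs to Γ_O and which tend to zero at the boundary of O in B, i.e. for every x in the frontier of O and every ε > 0 there is a neighbourhood U of x in B with ‖s(y)‖ < ε for all y ∈ U ∩ O. Then ((E_x)_{x∈B}, Γ) is a continuous family of Hilbert spaces over B (the trivial extension of the family over O). -/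

import Mathlib

/-- A continuous family of Hilbert spaces over a topological space `B` (Dixmier):
a family of complex Hilbert spaces `E x` together with a linear subspace `Γ` of the
product `∀ x, E x` satisfying the three axioms of Definition 2.3. -/
structure ContinuousFamilyOfHilbertSpaces (B : Type*) [TopologicalSpace B]
    (E : B → Type*) [∀ x, NormedAddCommGroup (E x)] [∀ x, InnerProductSpace ℂ (E x)]
    [∀ x, CompleteSpace (E x)] : Type _ where
  /-- The linear subspace of sections. -/
  Γ : Submodule ℂ (∀ x, E x)
  /-- (1) sections pass through every vector of every fiber -/
  exists_section : ∀ (x : B) (v : E x), ∃ s ∈ Γ, s x = v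
  /-- (2) inner products of sections are continuous -/
  continuous_inner : ∀ s₁ ∈ Γ, ∀ s₂ ∈ Γ, Continuous fun x : B => (inner ℂ (s₁ x) (s₂ x) : ℂ)
  /-- (3) local uniform approximability by sections implies being a section -/
  mem_of_approx : ∀ w : ∀ x, E x,
    (∀ x : B, ∀ ε : ℝ, 0 < ε → ∃ U ∈ nhds x, ∃ s ∈ Γ, ∀ x' ∈ U, ‖s x' - w x'‖ < ε) →
    w ∈ Γ

/-- The tubular set `B(V, s, ε)` in the total space `Σ x, E x`. -/
def tubularSet {B : Type*} (E : B → Type*) [∀ x, NormedAddCommGroup (E x)]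
    (V : Set B) (s : ∀ x, E x) (ε : ℝ) : Set (Σ x, E x) :=
  {e | e.1 ∈ V ∧ ‖s e.1 - e.2‖ < ε}

/-- The collection of all tubular sets `B(V, s, ε)` with `V ⊆ B` open, `s ∈ Γ`, `ε > 0`. -/
def tubularSets {B : Type*} [TopologicalSpace B] {E : B → Type*}
    [∀ x, NormedAddCommGroup (E x)] [∀ x, InnerProductSpace ℂ (E x)]
    [∀ x, CompleteSpace (E x)] (F : ContinuousFamilyOfHilbertSpaces B E) :
    Set (Set (Σ x, E x)) :=
  {W | ∃ V : Set B, IsOpen V ∧ ∃ s ∈ F.Γ, ∃ ε : ℝ, 0 < ε ∧ W = tubularSet E V s ε}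


section Aux

variable {B : Type*} [TopologicalSpace B] {E : B → Type*}
  [∀ x, NormedAddCommGroup (E x)] [∀ x, InnerProductSpace ℂ (E x)]
  [∀ x, CompleteSpace (E x)]

/-- Norm of a section is continuous. -/
theorem cfhs_norm_continuous (F : ContinuousFamilyOfHilbertSpaces B E) {t : ∀ x, E x}
    (ht : t ∈ F.Γ) : Continuous fun x => ‖t x‖ := by
  have h := F.continuous_inner t ht t ht
  have : (fun x => ‖t x‖) = fun x => Real.sqrt ‖(inner ℂ (t x) (t x) : ℂ)‖ := by
    funext x
    rw [inner_self_eq_norm_sq_to_K]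
    simp [Real.sqrt_sq (norm_nonneg _)]
  rw [this]
  exact h.norm.sqrt

/-- Sections are stable under multiplication by a continuous scalar function. -/
theorem cfhs_smul_fun_mem (F : ContinuousFamilyOfHilbertSpaces B E) {t : ∀ x, E x}
    (ht : t ∈ F.Γ) {φ : B → ℂ} (hφ : Continuous φ) :
    (fun x => φ x • t x) ∈ F.Γ := by
  apply F.mem_of_approx
  intro x ε hε
  set M : ℝ := ‖t x‖ + 1 with hM
  have hMpos : 0 < M := by positivity
  have hδ : 0 < ε / (2 * M) := by positivity
  refine ⟨{y | ‖t y‖ < M} ∩ {y | ‖φ y - φ x‖ < ε / (2 * M)}, ?_, fun y => φ x • t y,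
    F.Γ.smul_mem _ ht, ?_⟩
  · apply Filter.inter_mem
    · exact (isOpen_lt (cfhs_norm_continuous F ht) continuous_const).mem_nhds
        (by simp only [Set.mem_setOf_eq, hM]; linarith)
    · exact (isOpen_lt ((hφ.sub continuous_const).norm) continuous_const).mem_nhds
        (by simpa using hδ)
  · rintro y ⟨h1, h2⟩
    have he : ‖φ x • t y - φ y • t y‖ = ‖φ x - φ y‖ * ‖t y‖ := by
      rw [← sub_smul, norm_smul]
    rw [he, norm_sub_rev]
    calc ‖φ y - φ x‖ * ‖t y‖ ≤ ‖φ y - φ x‖ * M :=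
          mul_le_mul_of_nonneg_left h1.le (norm_nonneg _)
      _ < (ε / (2 * M)) * M := mul_lt_mul_of_pos_right h2 hMpos
      _ = ε / 2 := by field_simp
      _ < ε := by linarith

end Aux

/-- Trivial extension: given a continuous family of Hilbert spaces over an open subset
`O ⊆ B` (with trivial fibers outside `O`), the sections over `O` which tend to zero at
the boundary of `O` in `B` form a continuous family of Hilbert spaces over `B`. -/
theorem trivial_extension_continuousFamily
    {B : Type*} [TopologicalSpace B] [LocallyCompactSpace B] [T2Space B]
    (O : Set B) (hO : IsOpen O)
    (E : B → Type*) [∀ x, NormedAddCommGroup (E x)] [∀ x, InnerProductSpace ℂ (E x)]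
    [∀ x, CompleteSpace (E x)]
    (htriv : ∀ x ∉ O, ∀ v : E x, v = 0)
    (F_O : ContinuousFamilyOfHilbertSpaces O (fun x : O => E x)) :
    ∃ F : ContinuousFamilyOfHilbertSpaces B E,
      (F.Γ : Set (∀ x, E x)) =
        {s | (fun x : O => s x) ∈ F_O.Γ ∧
          ∀ x ∈ frontier O, ∀ ε : ℝ, 0 < ε →
            ∃ U ∈ nhds x, ∀ y ∈ U ∩ O, ‖s y‖ < ε} := by
  classical
  -- The candidate set of sections
  set S : Set (∀ x, E x) :=
    {s | (fun x : O => s x) ∈ F_O.Γ ∧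
      ∀ x ∈ frontier O, ∀ ε : ℝ, 0 < ε →
        ∃ U ∈ nhds x, ∀ y ∈ U ∩ O, ‖s y‖ < ε} with hS
  have hfront : ∀ x, x ∉ O → x ∈ closure O → x ∈ frontier O := by
    intro x hx hxc
    rw [hO.frontier_eq]; exact ⟨hxc, hx⟩
  have hfront_not_mem : ∀ x ∈ frontier O, x ∉ O := by
    intro x hx
    rw [hO.frontier_eq] at hx; exact hx.2
  -- S is a submodule
  have zero_mem : (0 : ∀ x, E x) ∈ S := by
    refine ⟨?_, ?_⟩
    · have : (fun x : O => (0 : ∀ x, E x) x) = (0 : ∀ x : O, E x) := rfl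
      rw [this]; exact F_O.Γ.zero_mem
    · intro x _ ε hε
      exact ⟨Set.univ, Filter.univ_mem, fun y _ => by simpa using hε⟩
  have add_mem : ∀ {s t : ∀ x, E x}, s ∈ S → t ∈ S → s + t ∈ S := by
    rintro s t ⟨hs1, hs2⟩ ⟨ht1, ht2⟩
    refine ⟨?_, ?_⟩
    · have : (fun x : O => (s + t) x) = (fun x : O => s x) + (fun x : O => t x) := rfl
      rw [this]; exact F_O.Γ.add_mem hs1 ht1
    · intro x hx ε hε
      obtain ⟨U1, hU1, hU1'⟩ := hs2 x hx (ε / 2) (by linarith)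
      obtain ⟨U2, hU2, hU2'⟩ := ht2 x hx (ε / 2) (by linarith)
      refine ⟨U1 ∩ U2, Filter.inter_mem hU1 hU2, ?_⟩
      rintro y ⟨⟨hy1, hy2⟩, hyO⟩
      calc ‖(s + t) y‖ ≤ ‖s y‖ + ‖t y‖ := norm_add_le _ _
        _ < ε / 2 + ε / 2 := add_lt_add (hU1' y ⟨hy1, hyO⟩) (hU2' y ⟨hy2, hyO⟩)
        _ = ε := by ring
  have smul_mem : ∀ (c : ℂ) {s : ∀ x, E x}, s ∈ S → c • s ∈ S := by
    rintro c s ⟨hs1, hs2⟩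
    refine ⟨?_, ?_⟩
    · have : (fun x : O => (c • s) x) = c • (fun x : O => s x) := rfl
      rw [this]; exact F_O.Γ.smul_mem c hs1
    · intro x hx ε hε
      have hc : (0:ℝ) < ‖c‖ + 1 := by positivity
      obtain ⟨U, hU, hU'⟩ := hs2 x hx (ε / (‖c‖ + 1)) (by positivity)
      refine ⟨U, hU, fun y hy => ?_⟩
      have : ‖(c • s) y‖ = ‖c‖ * ‖s y‖ := norm_smul c (s y)
      rw [this]
      calc ‖c‖ * ‖s y‖ ≤ (‖c‖ + 1) * ‖s y‖ :=
            mul_le_mul_of_nonneg_right (by linarith) (norm_nonneg _)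
        _ < (‖c‖ + 1) * (ε / (‖c‖ + 1)) := by
            apply mul_lt_mul_of_pos_left (hU' y hy) hc
        _ = ε := by field_simp
  set Γ' : Submodule ℂ (∀ x, E x) :=
    { carrier := S
      zero_mem' := zero_mem
      add_mem' := add_mem
      smul_mem' := smul_mem } with hΓ'
  -- key facts: sections vanish at points outside O
  have hzero : ∀ (s : ∀ x, E x) (x : B), x ∉ O → s x = 0 := fun s x hx => htriv x hx (s x)
  -- Axiom (1)
  have ax1 : ∀ (x : B) (v : E x), ∃ s ∈ Γ', s x = v := by
    intro x v
    by_cases hx : x ∈ O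
    · -- find a section of F_O through v, and cut it off
      obtain ⟨t, htΓ, htx⟩ := F_O.exists_section ⟨x, hx⟩ v
      obtain ⟨k, hk_comp, hxk, hkO⟩ :=
        exists_compact_between isCompact_singleton hO (Set.singleton_subset_iff.mpr hx)
      obtain ⟨f, hf1, hf0, _, _⟩ :=
        exists_continuous_one_zero_of_isCompact (s := {x}) (t := (interior k)ᶜ)
          isCompact_singleton isOpen_interior.isClosed_compl
          (Set.disjoint_singleton_left.mpr (by simp only [Set.mem_compl_iff, not_not]; exact hxk rfl))
      -- f = 1 at x, f = 0 off interior k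
      have hsupp : ∀ y : B, y ∉ k → f y = 0 := by
        intro y hy
        apply hf0
        simp only [Set.mem_compl_iff]
        exact fun h => hy (interior_subset h)
      refine ⟨fun y => if h : y ∈ O then ((f y : ℂ)) • t ⟨y, h⟩ else 0, ⟨?_, ?_⟩, ?_⟩
      · have he : (fun y : O => if h : (y : B) ∈ O then ((f y : ℂ)) • t ⟨y, h⟩ else 0) =
            fun y : O => ((f y : ℂ)) • t y := by
          funext y; rw [dif_pos y.2]
        rw [he]
        exact cfhs_smul_fun_mem F_O htΓ
          (Complex.continuous_ofReal.comp (f.continuous.comp continuous_subtype_val))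
      · intro z hz ε hε
        have hzk : z ∉ k := fun h => hfront_not_mem z hz (hkO h)
        refine ⟨kᶜ, (hk_comp.isClosed.isOpen_compl).mem_nhds hzk, ?_⟩
        rintro y ⟨hyk, hyO⟩
        simp only [dif_pos hyO, hsupp y hyk]
        simpa using hε
      · have hfx : f x = 1 := hf1 (Set.mem_singleton x)
        simp only [dif_pos hx, hfx, Complex.ofReal_one, one_smul]
        exact htx
    · exact ⟨0, Γ'.zero_mem, by rw [htriv x hx v]; rfl⟩
  -- Axiom (2)
  have ax2 : ∀ s₁ ∈ Γ', ∀ s₂ ∈ Γ',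
      Continuous fun x : B => (inner ℂ (s₁ x) (s₂ x) : ℂ) := by
    rintro s₁ ⟨hs₁Γ, hs₁f⟩ s₂ ⟨hs₂Γ, hs₂f⟩
    rw [continuous_iff_continuousAt]
    intro x
    by_cases hx : x ∈ O
    · -- continuity on the open set O
      have hrest : Continuous fun y : O => (inner ℂ (s₁ y) (s₂ y) : ℂ) :=
        F_O.continuous_inner _ hs₁Γ _ hs₂Γ
      have hco : ContinuousOn (fun y : B => (inner ℂ (s₁ y) (s₂ y) : ℂ)) O := by
        rw [continuousOn_iff_continuous_restrict]
        exact hrest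
      exact hco.continuousAt (hO.mem_nhds hx)
    · -- outside O the function vanishes
      have hfx : (inner ℂ (s₁ x) (s₂ x) : ℂ) = 0 := by
        rw [htriv x hx (s₁ x), inner_zero_left]
      rw [ContinuousAt, hfx, Metric.tendsto_nhds]
      intro ε hε
      by_cases hxc : x ∈ closure O
      · have hxf : x ∈ frontier O := hfront x hx hxc
        obtain ⟨U1, hU1, hU1'⟩ := hs₁f x hxf ε hε
        obtain ⟨U2, hU2, hU2'⟩ := hs₂f x hxf 1 one_pos
        filter_upwards [Filter.inter_mem hU1 hU2] with y hy
        rcases hy with ⟨hy1, hy2⟩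
        by_cases hyO : y ∈ O
        · have h1 := hU1' y ⟨hy1, hyO⟩
          have h2 := hU2' y ⟨hy2, hyO⟩
          rw [dist_zero_right]
          calc ‖(inner ℂ (s₁ y) (s₂ y) : ℂ)‖ ≤ ‖s₁ y‖ * ‖s₂ y‖ := norm_inner_le_norm _ _
            _ ≤ ‖s₁ y‖ * 1 := mul_le_mul_of_nonneg_left h2.le (norm_nonneg _)
            _ = ‖s₁ y‖ := mul_one _
            _ < ε := h1
        · rw [htriv y hyO (s₁ y), inner_zero_left, dist_zero_right, norm_zero]
          exact hε
      · have hU : (closure O)ᶜ ∈ nhds x := isClosed_closure.isOpen_compl.mem_nhds hxc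
        filter_upwards [hU] with y hy
        have hyO : y ∉ O := fun h => hy (subset_closure h)
        rw [htriv y hyO (s₁ y), inner_zero_left, dist_zero_right, norm_zero]
        exact hε
  -- Axiom (3)
  have ax3 : ∀ w : ∀ x, E x,
      (∀ x : B, ∀ ε : ℝ, 0 < ε → ∃ U ∈ nhds x, ∃ s ∈ Γ', ∀ x' ∈ U, ‖s x' - w x'‖ < ε) →
      w ∈ Γ' := by
    intro w hw
    refine ⟨?_, ?_⟩
    · -- restriction to O is approximable
      apply F_O.mem_of_approx
      rintro ⟨x, hx⟩ ε hε
      obtain ⟨U, hU, s, ⟨hsΓ, _⟩, hs⟩ := hw x ε hε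
      refine ⟨Subtype.val ⁻¹' U, continuousAt_subtype_val.preimage_mem_nhds hU,
        fun y : O => s y, hsΓ, ?_⟩
      intro y hy
      exact hs y hy
    · intro x hx ε hε
      obtain ⟨U, hU, s, ⟨_, hsf⟩, hs⟩ := hw x (ε / 2) (by linarith)
      obtain ⟨U', hU', hU''⟩ := hsf x hx (ε / 2) (by linarith)
      refine ⟨U ∩ U', Filter.inter_mem hU hU', ?_⟩
      rintro y ⟨⟨hy1, hy2⟩, hyO⟩
      calc ‖w y‖ = ‖s y - (s y - w y)‖ := by rw [sub_sub_cancel]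
        _ ≤ ‖s y‖ + ‖s y - w y‖ := norm_sub_le _ _
        _ < ε / 2 + ε / 2 := add_lt_add (hU'' y ⟨hy2, hyO⟩) (hs y hy1)
        _ = ε := by ring
  exact ⟨⟨Γ', ax1, ax2, ax3⟩, rfl⟩
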